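/- arXiv:2402.02982 — 4 statements merged into one kernel-verified Lean document; each statement's English description precedes it below -/
import Mathlib

section
/- For an (n,k,δ) convolutional code C over a finite field F_q, the free distance satisfies d_free(C) ≤ (n-k)(⌊δ/k⌋ + 1) + δ + 1 (the generalized Singleton bound). -/
/-!
Repeatedly cancelling top row coefficients by unimodular row operations turns the generator
matrix into a row-reduced one `h`, whose matrix of leading row coefficients has full rank. Then
some maximal minor has degree `∑ d i`, where `d i` is the degree of the row `h i`; unimodular row
operations do not change the degrees of the maximal minors, so `∑ d i ≤ δ`. With
`ν = ⌊δ/k⌋`, the codewords `X ^ j • h i` with `j + d i ≤ ν` are `F`-linearly independent and have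
all coefficients in degrees `≤ ν`, so they span a block code of length `n (ν + 1)` and dimension at
least `k (ν + 1) - δ ≥ 1`. Its Singleton bound gives a nonzero codeword of weight at most
`n (ν + 1) - (k (ν + 1) - δ) + 1 = (n - k) (ν + 1) + δ + 1`.
-/

open Polynomial

/-- Hamming weight of a polynomial vector: total number of nonzero coefficients. -/
noncomputable def wtVec {F : Type*} [Field F] {n : ℕ} (v : Fin n → F[X]) : ℕ :=
  ∑ j, (v j).support.card

/-- Free distance: minimum Hamming weight of a nonzero codeword. -/
noncomputable def dfree {F : Type*} [Field F] {n : ℕ}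
    (C : Submodule F[X] (Fin n → F[X])) : ℕ :=
  sInf { w | ∃ v ∈ C, v ≠ 0 ∧ wtVec v = w }

/-- Internal degree: maximal degree of the k×k minors of G. -/
noncomputable def intDeg {F : Type*} [Field F] {k n : ℕ}
    (G : Matrix (Fin k) (Fin n) F[X]) : ℕ :=
  Finset.univ.sup fun σ : Fin k ↪ Fin n => ((G.submatrix id σ).det).natDegree

open Matrix

section RowDegree

variable {R : Type*} [Semiring R] {ι : Type*} [Fintype ι]

noncomputable def rowDeg (v : ι → R[X]) : ℕ :=
  Finset.univ.sup fun j => (v j).natDegree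

lemma rowDeg_le_iff {v : ι → R[X]} {m : ℕ} : rowDeg v ≤ m ↔ ∀ j, (v j).natDegree ≤ m := by
  simp [rowDeg]

lemma natDegree_le_rowDeg (v : ι → R[X]) (j : ι) : (v j).natDegree ≤ rowDeg v :=
  rowDeg_le_iff.1 le_rfl j

lemma rowDeg_lt_of_coeff_eq_zero {v : ι → R[X]} {d : ℕ} (hv : v ≠ 0)
    (hdeg : ∀ j, (v j).natDegree ≤ d) (hcoeff : ∀ j, (v j).coeff d = 0) : rowDeg v < d := by
  have hlt : ∀ j, v j ≠ 0 → (v j).natDegree < d := fun j hj =>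
    (hdeg j).lt_of_ne fun h => leadingCoeff_ne_zero.2 hj (by rw [leadingCoeff, h, hcoeff j])
  obtain ⟨j₀, hj₀⟩ := Function.ne_iff.1 hv
  have hd : 0 < d := (Nat.zero_le _).trans_lt (hlt j₀ hj₀)
  refine Nat.lt_of_le_pred hd (rowDeg_le_iff.2 fun j => ?_)
  by_cases hj : v j = 0
  · simp [hj]
  · exact Nat.le_pred_of_lt (hlt j hj)

end RowDegree

lemma Polynomial.coeff_prod_sum_of_natDegree_le {R ι : Type*} [CommSemiring R] (s : Finset ι)
    (f : ι → R[X]) (d : ι → ℕ) (h : ∀ i ∈ s, (f i).natDegree ≤ d i) :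
    (∏ i ∈ s, f i).coeff (∑ i ∈ s, d i) = ∏ i ∈ s, (f i).coeff (d i) := by
  classical
  induction s using Finset.induction_on with
  | empty => simp
  | insert a s ha ih =>
    rw [Finset.prod_insert ha, Finset.sum_insert ha, Finset.prod_insert ha,
      coeff_mul_add_eq_of_natDegree_le (h a (Finset.mem_insert_self a s))
        ((natDegree_prod_le _ _).trans (Finset.sum_le_sum fun i hi =>
          h i (Finset.mem_insert_of_mem hi))),
      ih fun i hi => h i (Finset.mem_insert_of_mem hi)]

lemma Matrix.coeff_det_of_natDegree_le {R m : Type*} [CommRing R] [Fintype m] [DecidableEq m]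
    (M : Matrix m m R[X]) (d : m → ℕ) (h : ∀ i j, (M i j).natDegree ≤ d i) :
    M.det.coeff (∑ i, d i) = (of fun i j => (M i j).coeff (d i)).det := by
  rw [det_apply, det_apply, finsetSum_coeff]
  refine Finset.sum_congr rfl fun σ _ => ?_
  rw [Units.smul_def, Units.smul_def, zsmul_eq_mul, zsmul_eq_mul, ← C_eq_intCast, coeff_C_mul,
    ← Equiv.sum_comp σ d, coeff_prod_sum_of_natDegree_le _ _ _ fun i _ => h (σ i) i]
  rfl

lemma Matrix.exists_isUnit_det_submatrix {K m n : Type*} [Field K] [Fintype m] [DecidableEq m]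
    [Fintype n] (L : Matrix m n K) (hL : LinearIndependent K L.row) :
    ∃ τ : m ↪ n, IsUnit (L.submatrix id τ).det := by
  obtain ⟨κ, a, ha, hspan, hli⟩ := exists_linearIndependent' K L.col
  have hcols : Submodule.span K (Set.range L.col) = ⊤ := by
    refine Submodule.eq_top_of_finrank_eq ?_
    rw [← rank_eq_finrank_span_cols, hL.rank_matrix, Module.finrank_fintype_fun_eq_card]
  let b : Module.Basis κ K (m → K) := .mk hli (by rw [hspan, hcols])
  let e : m ≃ κ := (Pi.basisFun K m).indexEquiv b
  refine ⟨⟨a ∘ e, ha.comp e.injective⟩, ?_⟩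
  rw [← isUnit_iff_isUnit_det, ← linearIndependent_cols_iff_isUnit]
  exact hli.comp e e.injective

noncomputable def Matrix.rowLeadingCoeff {R m n : Type*} [Semiring R] [Fintype n]
    (H : Matrix m n R[X]) : Matrix m n R :=
  of fun i j => (H i j).coeff (rowDeg (H i))

lemma sum_rowDeg_le_intDeg {F : Type*} [Field F] {k n : ℕ} (H : Matrix (Fin k) (Fin n) F[X])
    (hH : LinearIndependent F H.rowLeadingCoeff.row) : ∑ i, rowDeg (H i) ≤ intDeg H := by
  obtain ⟨τ, hτ⟩ := H.rowLeadingCoeff.exists_isUnit_det_submatrix hH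
  have hcoeff := (H.submatrix id τ).coeff_det_of_natDegree_le (fun i => rowDeg (H i))
    fun i j => natDegree_le_rowDeg (H i) (τ j)
  calc ∑ i, rowDeg (H i) ≤ (H.submatrix id τ).det.natDegree :=
        le_natDegree_of_ne_zero (by rw [hcoeff]; exact hτ.ne_zero)
    _ ≤ intDeg H := Finset.le_sup (f := fun σ : Fin k ↪ Fin n => (H.submatrix id σ).det.natDegree)
        (Finset.mem_univ τ)

lemma intDeg_mul_of_isUnit_det {F : Type*} [Field F] {k n : ℕ} {A : Matrix (Fin k) (Fin k) F[X]}
    (hA : IsUnit A.det) (G : Matrix (Fin k) (Fin n) F[X]) : intDeg (A * G) = intDeg G := by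
  obtain ⟨r, hr, hrA⟩ := Polynomial.isUnit_iff.1 hA
  unfold intDeg
  congr! 2 with σ
  have : (A * G).submatrix id σ = A * G.submatrix id σ := by
    simpa using submatrix_mul A G id id σ Function.bijective_id
  rw [this, det_mul, ← hrA, natDegree_C_mul_of_isUnit hr]

lemma Matrix.linearIndependent_row_mul {R m n : Type*} [CommRing R] [Fintype m] [DecidableEq m]
    {A : Matrix m m R} (hA : IsUnit A.det) {G : Matrix m n R} (hG : LinearIndependent R G.row) :
    LinearIndependent R (A * G).row := by
  rw [← vecMul_injective_iff] at hG ⊢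
  have hA' := vecMul_injective_of_isUnit ((isUnit_iff_isUnit_det A).2 hA)
  simpa only [Function.comp_def, vecMul_vecMul] using hG.comp hA'

lemma exists_isUnit_det_sum_rowDeg_mul_lt {F m n : Type*} [Field F] [Fintype m] [DecidableEq m]
    [Fintype n] (H : Matrix m n F[X]) (hH : LinearIndependent F[X] H.row)
    (hL : ¬ LinearIndependent F H.rowLeadingCoeff.row) :
    ∃ E : Matrix m m F[X], IsUnit E.det ∧ ∑ i, rowDeg ((E * H) i) < ∑ i, rowDeg (H i) := by
  classical
  obtain ⟨g, hg, i₁, hi₁⟩ := Fintype.not_linearIndependent_iff.1 hL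
  set d := fun i => rowDeg (H i)
  obtain ⟨i₀, hi₀, hmax⟩ := Finset.exists_max_image {i | g i ≠ 0} d ⟨i₁, by simpa using hi₁⟩
  replace hi₀ : g i₀ ≠ 0 := by simpa using hi₀
  -- shifting row `i` up by `d i₀ - d i`, the relation `g` cancels the coefficients of degree `d i₀`
  let c : m → F[X] := fun i => C (g i) * X ^ (d i₀ - d i)
  have hterm : ∀ i j, (c i * H i j).natDegree ≤ d i₀ ∧
      (c i * H i j).coeff (d i₀) = g i * H.rowLeadingCoeff i j := by
    intro i j
    by_cases hgi : g i = 0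
    · simp [c, hgi]
    have hdi : d i ≤ d i₀ := hmax i (by simpa using hgi)
    refine ⟨natDegree_mul_le.trans ?_, ?_⟩
    · have h₁ : (H i j).natDegree ≤ d i := natDegree_le_rowDeg (H i) j
      have h₂ : (c i).natDegree ≤ d i₀ - d i := natDegree_C_mul_X_pow_le _ _
      omega
    · rw [mul_assoc, coeff_C_mul, coeff_X_pow_mul', if_pos (Nat.sub_le _ _),
        Nat.sub_sub_self hdi]
      rfl
  let E := (1 : Matrix m m F[X]).updateRow i₀ c
  have hdetE : E.det = C (g i₀) := by
    have hc : ∑ i, c i • (1 : Matrix m m F[X]) i = c := by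
      ext j; simp [Matrix.one_apply]
    simpa [hc, c] using det_updateRow_sum (1 : Matrix m m F[X]) i₀ c
  have hEH : E * H = H.updateRow i₀ (c ᵥ* H) := by rw [updateRow_mul, Matrix.one_mul]
  have hvecMul : rowDeg (c ᵥ* H) < d i₀ := by
    refine rowDeg_lt_of_coeff_eq_zero ?_ (fun j => ?_) (fun j => ?_)
    · intro h
      have := vecMul_injective_iff.2 hH (h.trans (zero_vecMul H).symm)
      exact hi₀ (by simpa [c] using congrFun this i₀)
    · exact natDegree_sum_le_of_forall_le _ _ fun i _ => (hterm i j).1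
    · simp only [vecMul, dotProduct, finsetSum_coeff, (hterm _ j).2]
      simpa using congrFun hg j
  refine ⟨E, by rw [hdetE]; exact isUnit_C.2 (Ne.isUnit hi₀), Finset.sum_lt_sum (fun i _ => ?_)
    ⟨i₀, Finset.mem_univ _, by simpa [hEH] using hvecMul⟩⟩
  by_cases hi : i = i₀
  · subst hi; simpa [hEH] using hvecMul.le
  · simp [hEH, hi]

lemma exists_isUnit_det_linearIndependent_rowLeadingCoeff {F m n : Type*} [Field F] [Fintype m]
    [DecidableEq m] [Fintype n] (G : Matrix m n F[X]) (hG : LinearIndependent F[X] G.row) :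
    ∃ A : Matrix m m F[X], IsUnit A.det ∧ LinearIndependent F (A * G).rowLeadingCoeff.row := by
  induction hN : ∑ i, rowDeg (G i) using Nat.strong_induction_on generalizing G with
  | _ N ih =>
  by_cases hL : LinearIndependent F G.rowLeadingCoeff.row
  · exact ⟨1, by simp, by rwa [Matrix.one_mul]⟩
  obtain ⟨E, hE, hlt⟩ := exists_isUnit_det_sum_rowDeg_mul_lt G hG hL
  obtain ⟨A, hA, hAL⟩ := ih _ (hN ▸ hlt) (E * G) (linearIndependent_row_mul hE hG) rfl
  exact ⟨A * E, by rw [det_mul]; exact hA.mul hE, by rwa [Matrix.mul_assoc]⟩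

lemma exists_linearIndependent_sum_rowDeg_le_intDeg {F : Type*} [Field F] {k n : ℕ}
    (G : Matrix (Fin k) (Fin n) F[X]) (hG : LinearIndependent F[X] G.row) :
    ∃ H : Matrix (Fin k) (Fin n) F[X], LinearIndependent F[X] H.row ∧
      (∀ i, H i ∈ Submodule.span F[X] (Set.range G.row)) ∧ ∑ i, rowDeg (H i) ≤ intDeg G := by
  obtain ⟨A, hA, hAL⟩ := exists_isUnit_det_linearIndependent_rowLeadingCoeff G hG
  refine ⟨A * G, linearIndependent_row_mul hA hG, fun i => ?_, ?_⟩
  · rw [Submodule.mem_span_range_iff_exists_fun]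
    exact ⟨A i, (vecMul_eq_sum (A i) G).symm⟩
  · rw [← intDeg_mul_of_isUnit_det hA G]
    exact sum_rowDeg_le_intDeg _ hAL

lemma linearIndependent_X_pow_smul {R M ι : Type*} [CommRing R] [AddCommGroup M] [Module R[X] M]
    [Module R M] [IsScalarTower R R[X] M] {v : ι → M} (hv : LinearIndependent R[X] v) :
    LinearIndependent R fun p : ℕ × ι => (X : R[X]) ^ p.1 • v p.2 := by
  simpa [X_pow_eq_monomial] using linearIndependent_smul (basisMonomials R).linearIndependent hv

lemma exists_ne_zero_hammingNorm_add_finrank_le {K ι : Type*} [Field K] [DecidableEq K]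
    [Fintype ι] (V : Submodule K (ι → K)) (hV : V ≠ ⊥) :
    ∃ y ∈ V, y ≠ 0 ∧ hammingNorm y + Module.finrank K V ≤ Fintype.card ι + 1 := by
  classical
  have hpos : 1 ≤ Module.finrank K V := Submodule.one_le_finrank_iff.2 hV
  have hle : Module.finrank K V ≤ Fintype.card ι := by simpa using V.finrank_le
  obtain ⟨S, -, hS⟩ := Finset.exists_subset_card_eq
    (show Module.finrank K V - 1 ≤ (Finset.univ : Finset ι).card by rw [Finset.card_univ]; omega)
  -- restricting `V` to fewer than `finrank V` coordinates has a nonzero kernel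
  let π : V →ₗ[K] (S → K) := (LinearMap.funLeft K K ((↑) : S → ι)).comp V.subtype
  obtain ⟨⟨y, hyV⟩, hyπ, hy0⟩ := Submodule.ne_bot_iff _ |>.1 <|
    LinearMap.ker_ne_bot_of_finrank_lt (f := π)
      (by rw [Module.finrank_fintype_fun_eq_card, Fintype.card_coe]; omega)
  have hyS : ∀ i ∈ S, y i = 0 := fun i hi => congrFun (LinearMap.mem_ker.1 hyπ) ⟨i, hi⟩
  refine ⟨y, hyV, fun h => hy0 (by simpa using h), ?_⟩
  have : hammingNorm y ≤ (Finset.univ \ S).card :=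
    Finset.card_le_card fun i hi => by
      simp only [Finset.mem_filter, Finset.mem_univ, true_and] at hi
      simpa using fun hiS => hi (hyS i hiS)
  rw [Finset.card_sdiff_of_subset (Finset.subset_univ S), Finset.card_univ] at this
  omega

noncomputable def coeffVec (R : Type*) [Semiring R] {ι : Type*} (ν : ℕ) :
    (ι → R[X]) →ₗ[R] (ι × Fin (ν + 1) → R) :=
  LinearMap.pi fun p => (lcoeff R p.2).comp (LinearMap.proj p.1)


lemma disjoint_ker_coeffVec {R ι : Type*} [Semiring R] (ν : ℕ) :
    Disjoint (Submodule.pi Set.univ fun _ : ι => degreeLE R ν) (LinearMap.ker (coeffVec R ν)) := by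
  refine Submodule.disjoint_def.2 fun v hv hker => funext fun i => Polynomial.ext fun t => ?_
  by_cases ht : t ≤ ν
  · exact congrFun hker (i, ⟨t, Nat.lt_succ_of_le ht⟩)
  · exact coeff_eq_zero_of_degree_lt
      ((mem_degreeLE.1 (hv i trivial)).trans_lt (by exact_mod_cast not_le.1 ht))

lemma hammingNorm_coeffVec {F : Type*} [Field F] [DecidableEq F] {n ν : ℕ} {v : Fin n → F[X]}
    (hv : ∀ i, (v i).natDegree ≤ ν) : hammingNorm (coeffVec F ν v) = wtVec v := by
  rw [hammingNorm, Finset.card_filter, Fintype.sum_prod_type, wtVec]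
  refine Finset.sum_congr rfl fun i _ => ?_
  rw [← Finset.card_filter]
  refine Finset.card_bij (fun t _ => (t : ℕ))
    (fun t ht => mem_support_iff.2 (Finset.mem_filter.1 ht).2) (fun _ _ _ _ h => Fin.ext h)
    fun t ht => ?_
  exact ⟨⟨t, Nat.lt_succ_of_le ((le_natDegree_of_mem_supp t ht).trans (hv i))⟩,
    Finset.mem_filter.2 ⟨Finset.mem_univ _, mem_support_iff.1 ht⟩, rfl⟩

lemma exists_ne_zero_mem_span_wtVec_add_card_le {F κ : Type*} [Field F] [Fintype κ] [Nonempty κ]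
    {n ν : ℕ} (x : κ → Fin n → F[X]) (hx : LinearIndependent F x)
    (hdeg : ∀ p i, (x p i).natDegree ≤ ν) :
    ∃ w ∈ Submodule.span F (Set.range x), w ≠ 0 ∧ wtVec w + Fintype.card κ ≤ n * (ν + 1) + 1 := by
  classical
  have hD : Submodule.span F (Set.range x) ≤ Submodule.pi Set.univ fun _ => degreeLE F ν :=
    Submodule.span_le.2 <| Set.range_subset_iff.2 fun p i _ =>
      mem_degreeLE.2 (degree_le_of_natDegree_le (hdeg p i))
  have hli := hx.map ((disjoint_ker_coeffVec ν).mono_left hD)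
  have hV := finrank_span_eq_card hli
  obtain ⟨y, hyV, hy0, hy⟩ := exists_ne_zero_hammingNorm_add_finrank_le _
    (Submodule.one_le_finrank_iff.1 (hV ▸ Fintype.card_pos))
  rw [Set.range_comp, ← Submodule.map_span] at hyV
  obtain ⟨w, hw, rfl⟩ := hyV
  refine ⟨w, hw, fun h => hy0 (by simp [h]), ?_⟩
  have hwdeg i : (w i).natDegree ≤ ν :=
    natDegree_le_iff_degree_le.2 (mem_degreeLE.1 (hD hw i trivial))
  rw [hammingNorm_coeffVec hwdeg, hV] at hy
  simpa using hy

lemma exists_mem_ne_zero_wtVec_add_le {F : Type*} [Field F] {n k : ℕ}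
    (C : Submodule F[X] (Fin n → F[X])) (h : Fin k → Fin n → F[X])
    (hind : LinearIndependent F[X] h) (hC : ∀ i, h i ∈ C) {ν : ℕ}
    (hν : ∑ i, rowDeg (h i) < k * (ν + 1)) :
    ∃ w ∈ C, w ≠ 0 ∧ wtVec w + k * (ν + 1) ≤ n * (ν + 1) + ∑ i, rowDeg (h i) + 1 := by
  let ι := Σ i : Fin k, Fin (ν + 1 - rowDeg (h i))
  let x : ι → Fin n → F[X] := fun p => (X : F[X]) ^ (p.2 : ℕ) • h p.1
  have hx : LinearIndependent F x :=
    (linearIndependent_X_pow_smul hind).comp (fun p : ι => ((p.2 : ℕ), p.1))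
      fun ⟨i, j⟩ ⟨i', j'⟩ hij => by
        obtain ⟨hj, rfl⟩ := Prod.ext_iff.1 hij
        exact Sigma.ext rfl (heq_of_eq (Fin.ext hj))
  have hdeg : ∀ p l, (x p l).natDegree ≤ ν := by
    rintro ⟨i, j⟩ l
    have h₁ := natDegree_le_rowDeg (h i) l
    have h₂ := j.isLt
    have h₃ := natDegree_mul_le (p := (X : F[X]) ^ (j : ℕ)) (q := h i l)
    rw [natDegree_X_pow] at h₃
    change (X ^ (j : ℕ) * h i l).natDegree ≤ ν
    omega
  have hcard : k * (ν + 1) ≤ Fintype.card ι + ∑ i, rowDeg (h i) := by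
    calc k * (ν + 1) = ∑ _i : Fin k, (ν + 1) := by simp
      _ ≤ ∑ i, ((ν + 1 - rowDeg (h i)) + rowDeg (h i)) :=
          Finset.sum_le_sum fun i _ => le_tsub_add
      _ = Fintype.card ι + ∑ i, rowDeg (h i) := by simp [ι, Finset.sum_add_distrib]
  have : Nonempty ι := Fintype.card_pos_iff.1 (by omega)
  obtain ⟨w, hw, hw0, hwt⟩ := exists_ne_zero_mem_span_wtVec_add_card_le x hx hdeg
  have hxC : Submodule.span F (Set.range x) ≤ C.restrictScalars F :=
    Submodule.span_le.2 <| Set.range_subset_iff.2 fun p => C.smul_mem _ (hC p.1)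
  exact ⟨w, hxC hw, hw0, by omega⟩

theorem generalized_singleton_bound_general {F : Type*} [Field F] {n k : ℕ}
    (hk : 0 < k)
    (C : Submodule F[X] (Fin n → F[X]))
    (G : Matrix (Fin k) (Fin n) F[X])
    (hind : LinearIndependent F[X] (fun i => G i))
    (hspan : C = Submodule.span F[X] (Set.range (fun i => G i)))
    (δ : ℕ) (hδ : δ = intDeg G) :
    dfree C ≤ (n - k) * (δ / k + 1) + δ + 1 := by
  obtain ⟨H, hHind, hHC, hHdeg⟩ := exists_linearIndependent_sum_rowDeg_le_intDeg G hind
  have hδlt : δ < k * (δ / k + 1) := Nat.lt_mul_div_succ δ hk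
  obtain ⟨w, hwC, hw0, hwt⟩ := exists_mem_ne_zero_wtVec_add_le C H hHind
    (fun i => hspan ▸ hHC i) (ν := δ / k) (by omega)
  have hfree : dfree C ≤ wtVec w := Nat.sInf_le ⟨w, hwC, hw0, rfl⟩
  rw [Nat.sub_mul]
  omega

/-- Generalized Singleton bound for an (n,k,δ) convolutional code over a finite field. -/
theorem generalized_singleton_bound {F : Type*} [Field F] [Fintype F] {n k : ℕ}
    (hk : 0 < k) (hkn : k ≤ n)
    (C : Submodule F[X] (Fin n → F[X]))
    (G : Matrix (Fin k) (Fin n) F[X])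
    (hind : LinearIndependent F[X] (fun i => G i))
    (hspan : C = Submodule.span F[X] (Set.range (fun i => G i)))
    (δ : ℕ) (hδ : δ = intDeg G) :
    dfree C ≤ (n - k) * (δ / k + 1) + δ + 1 :=
  generalized_singleton_bound_general hk C G hind hspan δ hδ
end

section
/- For a non-catastrophic convolutional code C, the free distance equals the limit (equivalently the supremum) of the column distances: d_free(C) = sup_j d_j^c(C), where the minimum in d_free is taken over codewords with nonzero constant coefficient. -/
/-!
Let `m` bound the degrees of the entries of `H`. If a codeword `v` vanishes on a window
`[a, a + m]`, its truncation below degree `a` is again a codeword: `H` applied to the low part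
has degree at most `a + m`, `H` applied to the high part is divisible by `X ^ (a + m + 1)`, and
the two add up to `0`, so both vanish.

Let `d = d_free`. A codeword with `v₀ ≠ 0` and fewer than `d` nonzero coefficients among its
first `d (m + 1)` leaves one of the `d` consecutive windows of length `m + 1` empty (not the
first, which contains `v₀`), and truncating there yields a codeword with `v₀ ≠ 0` of weight
`< d`. Hence `d_free ≤ d^c_j` for `j = d (m + 1)`, while `d^c_j ≤ d_free` for every `j` because
truncation does not increase the weight.
-/

open Polynomial

-- Weight of the truncation (v_0, …, v_j) of a polynomial vector.
open scoped Classical in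
noncomputable def wtTrunc {F : Type*} [Field F] {n : ℕ} (v : Fin n → F[X]) (j : ℕ) : ℕ :=
  ∑ t ∈ Finset.range (j + 1), ∑ i, if (v i).coeff t ≠ 0 then 1 else 0

/-- The j-th column distance of a convolutional code. -/
noncomputable def colDist {F : Type*} [Field F] {n : ℕ}
    (C : Submodule F[X] (Fin n → F[X])) (j : ℕ) : ℕ :=
  sInf { w | ∃ v ∈ C, (∃ i, (v i).coeff 0 ≠ 0) ∧ wtTrunc v j = w }

/-- Free distance, minimum taken over codewords with nonzero constant coefficient. -/
noncomputable def dfree0 {F : Type*} [Field F] {n : ℕ}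
    (C : Submodule F[X] (Fin n → F[X])) : ℕ :=
  sInf { w | ∃ v ∈ C, (∃ i, (v i).coeff 0 ≠ 0) ∧ wtVec v = w }

open scoped PowerSeries

noncomputable section

section Truncation

variable {R : Type*}

theorem Polynomial.X_pow_dvd_sub_trunc [CommRing R] {p : R[X]} {a m : ℕ}
    (hgap : ∀ t, a ≤ t → t ≤ a + m → p.coeff t = 0) :
    X ^ (a + m + 1) ∣ p - PowerSeries.trunc a (p : R⟦X⟧) := by
  refine X_pow_dvd_iff.2 fun t ht => ?_
  rw [coeff_sub, PowerSeries.coeff_trunc, coeff_coe]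
  split_ifs with hta
  · exact sub_self _
  · rw [hgap t (not_lt.1 hta) (by omega), sub_zero]

theorem Polynomial.eq_zero_of_X_pow_dvd_of_natDegree_lt [Semiring R] {q : R[X]} {N : ℕ}
    (hdvd : X ^ N ∣ q) (hdeg : q.natDegree < N) : q = 0 := by
  ext t
  rcases lt_or_ge t N with ht | ht
  · exact X_pow_dvd_iff.1 hdvd t ht
  · exact coeff_eq_zero_of_natDegree_lt (hdeg.trans_le ht)

theorem sum_mul_trunc_eq_zero [CommRing R] {ι : Type*} [Fintype ι] {h v : ι → R[X]}
    {a m : ℕ} (hdeg : ∀ j, (h j).natDegree ≤ m) (hv : ∑ j, h j * v j = 0)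
    (hgap : ∀ t, a ≤ t → t ≤ a + m → ∀ j, (v j).coeff t = 0) :
    ∑ j, h j * PowerSeries.trunc a (v j : R⟦X⟧) = 0 := by
  set low := fun j => PowerSeries.trunc a (v j : R⟦X⟧)
  have hlow : ∑ j, h j * low j = -∑ j, h j * (v j - low j) := by
    simp only [mul_sub, Finset.sum_sub_distrib, hv, zero_sub, neg_neg]
  refine eq_zero_of_X_pow_dvd_of_natDegree_lt (N := a + m + 1) ?_ ?_
  · rw [hlow, dvd_neg]
    exact Finset.dvd_sum fun j _ =>
      dvd_mul_of_dvd_right (X_pow_dvd_sub_trunc fun t h₁ h₂ => hgap t h₁ h₂ j) _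
  · refine Nat.lt_succ_of_le (natDegree_sum_le_of_forall_le _ _ fun j _ => ?_)
    have hlow_deg : (low j).natDegree ≤ a :=
      natDegree_le_of_degree_le (PowerSeries.degree_trunc_lt _ a).le
    calc (h j * low j).natDegree ≤ (h j).natDegree + (low j).natDegree := natDegree_mul_le
      _ ≤ a + m := by have := hdeg j; omega

end Truncation

section Weights

variable {F : Type*} [Field F] {n : ℕ}

def truncVec (a : ℕ) (v : Fin n → F[X]) : Fin n → F[X] :=
  fun i => PowerSeries.trunc a (v i : F⟦X⟧)

open scoped Classical in
theorem card_support_trunc (a : ℕ) (p : F[X]) :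
    (PowerSeries.trunc a (p : F⟦X⟧)).support.card =
      ∑ t ∈ Finset.range a, if p.coeff t ≠ 0 then 1 else 0 := by
  rw [← Finset.card_filter]
  congr 1
  ext t
  simp [PowerSeries.coeff_trunc]

theorem wtTrunc_eq_wtVec_truncVec (v : Fin n → F[X]) (j : ℕ) :
    wtTrunc v j = wtVec (truncVec (j + 1) v) := by
  classical
  rw [wtTrunc, Finset.sum_comm]
  simp only [wtVec, truncVec, card_support_trunc]

theorem wtVec_truncVec_le (a : ℕ) (v : Fin n → F[X]) : wtVec (truncVec a v) ≤ wtVec v :=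
  Finset.sum_le_sum fun i _ => Finset.card_le_card fun t => by
    simp only [mem_support_iff, truncVec, PowerSeries.coeff_trunc, coeff_coe]
    split_ifs <;> simp_all

theorem wtVec_truncVec_le_wtTrunc {a j : ℕ} (haj : a ≤ j + 1) (v : Fin n → F[X]) :
    wtVec (truncVec a v) ≤ wtTrunc v j := by
  have htt : truncVec a (truncVec (j + 1) v) = truncVec a v :=
    funext fun i => PowerSeries.trunc_trunc_of_le _ haj
  rw [wtTrunc_eq_wtVec_truncVec, ← htt]
  exact wtVec_truncVec_le a _

theorem wtTrunc_le_wtVec (v : Fin n → F[X]) (j : ℕ) : wtTrunc v j ≤ wtVec v :=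
  (wtTrunc_eq_wtVec_truncVec v j).trans_le (wtVec_truncVec_le _ v)

open scoped Classical in
theorem card_filter_exists_coeff_ne_zero_le_wtTrunc (v : Fin n → F[X]) (j : ℕ) :
    ((Finset.range (j + 1)).filter fun t => ∃ i, (v i).coeff t ≠ 0).card ≤ wtTrunc v j := by
  rw [Finset.card_filter, wtTrunc]
  refine Finset.sum_le_sum fun t _ => ?_
  split_ifs with h
  · obtain ⟨i, hi⟩ := h
    simpa [hi] using Finset.single_le_sum (f := fun i => if (v i).coeff t ≠ 0 then 1 else 0)
      (fun _ _ => Nat.zero_le _) (Finset.mem_univ i)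
  · exact Nat.zero_le _

theorem exists_zero_window_of_wtTrunc_lt {v : Fin n → F[X]} {d m j : ℕ}
    (hj : d * (m + 1) ≤ j + 1) (hwt : wtTrunc v j < d) :
    ∃ b < d, ∀ t, b * (m + 1) ≤ t → t ≤ b * (m + 1) + m → ∀ i, (v i).coeff t = 0 := by
  classical
  set T := (Finset.range (j + 1)).filter fun t => ∃ i, (v i).coeff t ≠ 0
  have hT : (T.image (· / (m + 1))).card < (Finset.range d).card :=
    calc (T.image (· / (m + 1))).card ≤ T.card := Finset.card_image_le
      _ ≤ wtTrunc v j := card_filter_exists_coeff_ne_zero_le_wtTrunc v j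
      _ < (Finset.range d).card := by rwa [Finset.card_range]
  obtain ⟨b, hbd, hbT⟩ := Finset.exists_mem_notMem_of_card_lt_card hT
  rw [Finset.mem_range] at hbd
  refine ⟨b, hbd, fun t h₁ h₂ i => ?_⟩
  by_contra hne
  have hb1 : (b + 1) * (m + 1) ≤ d * (m + 1) := Nat.mul_le_mul_right _ hbd
  have htb : t / (m + 1) = b := Nat.div_eq_of_lt_le h₁ (by rw [add_mul]; omega)
  refine hbT (Finset.mem_image.2 ⟨t, Finset.mem_filter.2 ⟨?_, i, hne⟩, htb⟩)
  rw [Finset.mem_range]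
  rw [add_mul] at hb1
  omega

end Weights

section Distances

variable {F : Type*} [Field F] {n : ℕ}

/-- Both `dfree0 C = minWeight C wtVec` and `colDist C j = minWeight C (wtTrunc · j)` hold
by `rfl`. -/
def minWeight (C : Submodule F[X] (Fin n → F[X])) (f : (Fin n → F[X]) → ℕ) : ℕ :=
  sInf {w | ∃ v ∈ C, (∃ i, (v i).coeff 0 ≠ 0) ∧ f v = w}

theorem minWeight_le {C : Submodule F[X] (Fin n → F[X])} (f : (Fin n → F[X]) → ℕ)
    {v : Fin n → F[X]} (hv : v ∈ C) (hv0 : ∃ i, (v i).coeff 0 ≠ 0) : minWeight C f ≤ f v :=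
  Nat.sInf_le ⟨v, hv, hv0, rfl⟩

theorem minWeight_le_minWeight {C : Submodule F[X] (Fin n → F[X])}
    {f g : (Fin n → F[X]) → ℕ}
    (h : ∀ v ∈ C, (∃ i, (v i).coeff 0 ≠ 0) → minWeight C f ≤ g v) :
    minWeight C f ≤ minWeight C g := by
  rcases Set.eq_empty_or_nonempty {w | ∃ v ∈ C, (∃ i, (v i).coeff 0 ≠ 0) ∧ g v = w}
    with hempty | hne
  · have hf : {w | ∃ v ∈ C, (∃ i, (v i).coeff 0 ≠ 0) ∧ f v = w} = ∅ :=
      Set.eq_empty_of_forall_notMem fun _ ⟨v, hv, hv0, _⟩ =>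
        hempty.subset ⟨v, hv, hv0, rfl⟩
    simp only [minWeight, hf, hempty, Nat.sInf_empty, le_refl]
  · exact le_csInf hne fun _ ⟨v, hv, hv0, hw⟩ => hw ▸ h v hv hv0

theorem colDist_le_dfree0 (C : Submodule F[X] (Fin n → F[X])) (j : ℕ) :
    colDist C j ≤ dfree0 C :=
  minWeight_le_minWeight fun v hv hv0 =>
    (minWeight_le (wtTrunc · j) hv hv0).trans (wtTrunc_le_wtVec v j)

variable {ι : Type*} {C : Submodule F[X] (Fin n → F[X])} {H : Matrix ι (Fin n) F[X]} {m : ℕ}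

theorem dfree0_le_wtTrunc (hm : ∀ r j, (H r j).natDegree ≤ m)
    (hker : ∀ v : Fin n → F[X], v ∈ C ↔ ∀ r, ∑ j, H r j * v j = 0)
    {v : Fin n → F[X]} (hv : v ∈ C) (hv0 : ∃ i, (v i).coeff 0 ≠ 0)
    {j : ℕ} (hj : dfree0 C * (m + 1) ≤ j + 1) : dfree0 C ≤ wtTrunc v j := by
  by_contra! hlt
  obtain ⟨b, hbd, hgap⟩ := exists_zero_window_of_wtTrunc_lt hj hlt
  obtain ⟨i, hi⟩ := hv0
  have hb : 0 < b := Nat.pos_of_ne_zero fun hb0 => hi (hgap 0 (by simp [hb0]) (by simp [hb0]) i)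
  set a := b * (m + 1)
  have ha : 0 < a := Nat.mul_pos hb m.succ_pos
  have haj : a ≤ j + 1 := (Nat.mul_le_mul_right _ hbd.le).trans hj
  have hmem : truncVec a v ∈ C :=
    (hker _).2 fun r => sum_mul_trunc_eq_zero (hm r) ((hker v).1 hv r) hgap
  have hmem0 : ∃ i, (truncVec a v i).coeff 0 ≠ 0 :=
    ⟨i, by rwa [truncVec, PowerSeries.coeff_trunc, if_pos ha, coeff_coe]⟩
  exact hlt.not_ge <| (minWeight_le wtVec hmem hmem0).trans (wtVec_truncVec_le_wtTrunc haj v)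

theorem dfree0_le_colDist (hm : ∀ r j, (H r j).natDegree ≤ m)
    (hker : ∀ v : Fin n → F[X], v ∈ C ↔ ∀ r, ∑ j, H r j * v j = 0)
    {j : ℕ} (hj : dfree0 C * (m + 1) ≤ j + 1) : dfree0 C ≤ colDist C j :=
  minWeight_le_minWeight fun _ hv hv0 => dfree0_le_wtTrunc hm hker hv hv0 hj

end Distances

end

theorem dfree_eq_iSup_colDist_general {F : Type*} [Field F] {n k : ℕ}
    (C : Submodule F[X] (Fin n → F[X]))
    (H : Matrix (Fin (n - k)) (Fin n) F[X])
    (hker : ∀ v : Fin n → F[X], v ∈ C ↔ ∀ r, ∑ j, H r j * v j = 0) :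
    dfree0 C = ⨆ j, colDist C j := by
  obtain ⟨m, hm⟩ := Finite.exists_le fun rj : Fin (n - k) × Fin n => (H rj.1 rj.2).natDegree
  have hbdd : BddAbove (Set.range (colDist C)) :=
    ⟨dfree0 C, Set.forall_mem_range.2 (colDist_le_dfree0 C)⟩
  refine le_antisymm ?_ (ciSup_le (colDist_le_dfree0 C))
  calc dfree0 C ≤ colDist C (dfree0 C * (m + 1)) :=
        dfree0_le_colDist (fun r j => hm (r, j)) hker (Nat.le_succ _)
    _ ≤ ⨆ j, colDist C j := le_ciSup hbdd _

/-- For a non-catastrophic convolutional code (one admitting a full-row-rank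
parity-check matrix), the free distance equals the supremum of the column distances. -/
theorem dfree_eq_iSup_colDist {F : Type*} [Field F] {n k : ℕ}
    (C : Submodule F[X] (Fin n → F[X]))
    (H : Matrix (Fin (n - k)) (Fin n) F[X])
    (hHrank : LinearIndependent F[X] (fun i => H i))
    (hker : ∀ v : Fin n → F[X], v ∈ C ↔ ∀ r, ∑ j, H r j * v j = 0) :
    dfree0 C = ⨆ j, colDist C j :=
  dfree_eq_iSup_colDist_general C H hker
end

section
/- For G(z) = (z^6 + z^4 + 1, z^6 + z^5 + z^4 + z^3 + z + 1) over F_2, every codeword u(z)·G(z) arising from a nonzero u(z) of degree at most 7 has Hamming weight at least 9; i.e., the minimum weight over nonzero inputs of degree ≤ 7 is strictly greater than the free distance 8. -/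
open Polynomial Finset

def g1c : ℕ → ZMod 2 := fun j => if j = 0 ∨ j = 4 ∨ j = 6 then 1 else 0
def g2c : ℕ → ZMod 2 := fun j => if j = 0 ∨ j = 1 ∨ j = 3 ∨ j = 4 ∨ j = 5 ∨ j = 6 then 1 else 0

def pc (g : ℕ → ZMod 2) (c : Fin 8 → ZMod 2) (k : ℕ) : ZMod 2 :=
  ∑ i : Fin 8, c i * (if (i : ℕ) ≤ k then g (k - i) else 0)

def W (c : Fin 8 → ZMod 2) : ℕ :=
  ((range 14).filter fun k => pc g1c c k ≠ 0).card +
  ((range 14).filter fun k => pc g2c c k ≠ 0).card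

set_option maxRecDepth 100000 in
set_option maxHeartbeats 4000000 in
lemma key : ∀ c : Fin 8 → ZMod 2, c ≠ 0 → 9 ≤ W c := by decide

lemma g1coeff (j : ℕ) : (X ^ 6 + X ^ 4 + 1 : (ZMod 2)[X]).coeff j
    = (if j = 0 ∨ j = 4 ∨ j = 6 then 1 else 0) := by
  simp only [coeff_add, coeff_X_pow, coeff_one]
  split_ifs <;> simp_all

lemma g2coeff (j : ℕ) : (X ^ 6 + X ^ 5 + X ^ 4 + X ^ 3 + X + 1 : (ZMod 2)[X]).coeff j
    = (if j = 0 ∨ j = 1 ∨ j = 3 ∨ j = 4 ∨ j = 5 ∨ j = 6 then 1 else 0) := by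
  simp only [coeff_add, coeff_X_pow, coeff_X, coeff_one]
  split_ifs <;> simp_all

lemma supcard (p : (ZMod 2)[X]) (h : p.natDegree < 14) :
    p.support.card = ((range 14).filter fun k => p.coeff k ≠ 0).card := by
  congr 1
  ext n
  simp only [mem_support_iff, mem_filter, mem_range]
  exact ⟨fun hn => ⟨lt_of_le_of_lt (le_natDegree_of_ne_zero hn) h, hn⟩, fun h => h.2⟩

lemma prodcoeff (u g : (ZMod 2)[X]) (hu : u.natDegree ≤ 7) (k : ℕ) :
    (u * g).coeff k = ∑ i : Fin 8, u.coeff i * (if (i : ℕ) ≤ k then g.coeff (k - i) else 0) := by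
  conv_lhs => rw [Polynomial.as_sum_range' u 8 (by omega)]
  rw [Finset.sum_mul, finset_sum_coeff, Fin.sum_univ_eq_sum_range
    (fun i => u.coeff i * (if i ≤ k then g.coeff (k - i) else 0))]
  refine Finset.sum_congr rfl fun i _ => ?_
  rw [show (monomial i (u.coeff i)) = C (u.coeff i) * X ^ i from (C_mul_X_pow_eq_monomial).symm,
    mul_comm (C (u.coeff i)) (X ^ i), mul_assoc, mul_comm (X ^ i) (C (u.coeff i) * g),
    coeff_mul_X_pow']
  split_ifs <;> simp [coeff_C_mul]

/-- For the binary code generated by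
G(z) = (z^6 + z^4 + 1, z^6 + z^5 + z^4 + z^3 + z + 1), every codeword coming from a
nonzero input of degree at most 7 has Hamming weight at least 9, i.e. strictly more
than the free distance 8. -/
theorem heapmod_short_inputs_insufficient :
    ∀ u : (ZMod 2)[X], u ≠ 0 → u.natDegree ≤ 7 →
      9 ≤ (u * (X ^ 6 + X ^ 4 + 1)).support.card +
          (u * (X ^ 6 + X ^ 5 + X ^ 4 + X ^ 3 + X + 1)).support.card := by
  intro u hu hd
  set c : Fin 8 → ZMod 2 := fun i => u.coeff i with hc
  have hcne : c ≠ 0 := by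
    intro h
    apply hu
    ext k
    rcases le_or_gt k 7 with hk | hk
    · have := congrFun h ⟨k, by omega⟩
      simpa [hc] using this
    · simp [coeff_eq_zero_of_natDegree_lt (lt_of_le_of_lt hd hk)]
  have hg1 : (X ^ 6 + X ^ 4 + 1 : (ZMod 2)[X]).natDegree ≤ 6 := by compute_degree
  have hg2 : (X ^ 6 + X ^ 5 + X ^ 4 + X ^ 3 + X + 1 : (ZMod 2)[X]).natDegree ≤ 6 := by
    compute_degree
  have hd1 : (u * (X ^ 6 + X ^ 4 + 1)).natDegree < 14 :=
    lt_of_le_of_lt (natDegree_mul_le.trans (add_le_add hd hg1)) (by omega)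
  have hd2 : (u * (X ^ 6 + X ^ 5 + X ^ 4 + X ^ 3 + X + 1)).natDegree < 14 :=
    lt_of_le_of_lt (natDegree_mul_le.trans (add_le_add hd hg2)) (by omega)
  have e1 : ∀ k, (u * (X ^ 6 + X ^ 4 + 1)).coeff k = pc g1c c k := by
    intro k
    rw [prodcoeff u _ hd k]
    simp only [pc, hc, g1coeff, g1c]
  have e2 : ∀ k, (u * (X ^ 6 + X ^ 5 + X ^ 4 + X ^ 3 + X + 1)).coeff k = pc g2c c k := by
    intro k
    rw [prodcoeff u _ hd k]
    simp only [pc, hc, g2coeff, g2c]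
  rw [supcard _ hd1, supcard _ hd2]
  simp only [e1, e2]
  exact key c hcne
end

section
/- For a non-catastrophic binary rate-1/n convolutional code with memory M explored by the FAST algorithm: if a state S (shift-register content in F_2^M) has its rightmost nonzero entry followed by m zeros, then every path in the state-transition diagram from the zero-state to S using inputs has length at least M − m, and every codeword passing through state S at time t with nonzero initial input has accumulated output weight at least d^c_{M−m−1}, the (M−m−1)-st column distance. -/
open Polynomial

section ColumnDistance

variable {F : Type*} [Field F] {n : ℕ}

theorem wtTrunc_mono (v : Fin n → F[X]) {j k : ℕ} (hjk : j ≤ k) :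
    wtTrunc v j ≤ wtTrunc v k :=
  Finset.sum_le_sum_of_subset (Finset.range_subset_range.2 (Nat.succ_le_succ hjk))

theorem colDist_le_wtTrunc {C : Submodule F[X] (Fin n → F[X])} {v : Fin n → F[X]}
    (hv : v ∈ C) (hv0 : ∃ i, (v i).coeff 0 ≠ 0) (j : ℕ) :
    colDist C j ≤ wtTrunc v j :=
  Nat.sInf_le ⟨v, hv, hv0, rfl⟩

theorem colDist_le_wtTrunc_of_le {C : Submodule F[X] (Fin n → F[X])} {v : Fin n → F[X]}
    (hv : v ∈ C) (hv0 : ∃ i, (v i).coeff 0 ≠ 0) {j k : ℕ} (hjk : j ≤ k) :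
    colDist C j ≤ wtTrunc v k :=
  (colDist_le_wtTrunc hv hv0 j).trans (wtTrunc_mono v hjk)

theorem encode_mem_span_singleton (g : Fin n → F[X]) (u : F[X]) :
    (fun j => u * g j) ∈ Submodule.span F[X] {g} :=
  Submodule.mem_span_singleton.2 ⟨u, rfl⟩

theorem exists_encode_coeff_zero_ne_zero {g : Fin n → F[X]} (hg0 : ∃ j, (g j).coeff 0 ≠ 0)
    {u : F[X]} (hu0 : u.coeff 0 ≠ 0) : ∃ j, (u * g j).coeff 0 ≠ 0 := by
  obtain ⟨j, hj⟩ := hg0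
  exact ⟨j, by simpa [mul_coeff_zero] using ⟨hu0, hj⟩⟩

end ColumnDistance

theorem lt_of_state_ne_zero {M : ℕ} {R : Type*} [Zero R] {S : Fin M → R} {a : ℕ → R} {t : ℕ}
    (hS : ∀ i : Fin M, S i = if (i : ℕ) < t then a (t - 1 - (i : ℕ)) else 0)
    {i : Fin M} (hi : S i ≠ 0) : (i : ℕ) < t := by
  by_contra hit
  exact hi (by rw [hS, if_neg hit])

/-- FAST algorithm pruning rule, rate 1/n over F₂, memory M.  Suppose the codeword
generated by input u (with u_0 ≠ 0) passes at time t through the state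
S = (u_{t−1}, …, u_{t−M}) whose rightmost nonzero entry (at position M−1−m) is followed
by m zeros.  Then the path from the zero-state to S has length t ≥ M − m, and the
accumulated output weight wt(v_0, …, v_{t−1}) is at least the (M−m−1)-st column
distance. -/
theorem fast_pruning_bound {n M : ℕ} (g : Fin n → (ZMod 2)[X])
    (hg0 : ∃ j, (g j).coeff 0 ≠ 0)
    (C : Submodule (ZMod 2)[X] (Fin n → (ZMod 2)[X]))
    (hC : C = Submodule.span (ZMod 2)[X] {g})
    (u : (ZMod 2)[X]) (hu0 : u.coeff 0 ≠ 0)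
    (t m : ℕ) (hm : m < M)
    (S : Fin M → ZMod 2)
    (hS : ∀ i : Fin M, S i = if (i : ℕ) < t then u.coeff (t - 1 - (i : ℕ)) else 0)
    (hr : S ⟨M - 1 - m, by omega⟩ ≠ 0) :
    M - m ≤ t ∧ colDist C (M - m - 1) ≤ wtTrunc (fun j => u * g j) (t - 1) := by
  have hlen : M - m ≤ t := by
    have hpos : M - 1 - m < t := lt_of_state_ne_zero hS hr
    omega
  refine ⟨hlen, colDist_le_wtTrunc_of_le ?_ (exists_encode_coeff_zero_ne_zero hg0 hu0) (by omega)⟩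
  exact hC ▸ encode_mem_span_singleton g u
end
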